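/- Fix m ≥ 1, let σ₁ > σ₂ > … > σ_m > 0 be the spiked population eigenvalues and σ_{m+1}, …, σ_p ∈ (c, c⁻¹) for some 0 < c < 1, with σ_i → ∞ as dimension grows for i ≤ m. For each 1 ≤ i ≤ m, if (1/(pσ_i))·∑_{k=1}^{p-m} σ_{m+k}/(1 - σ_{m+k}/σ_i) < 1/2, then there exists a unique θ_i ∈ [σ_i, 2σ_i] solving θ_i/σ_i = (1 - (1/(pθ_i))·∑_{k=1}^{p-m} σ_{m+k}/(1 - σ_{m+k}/σ_i))⁻¹, and this solution satisfies θ_i/σ_i = 1 + O((∑_{k=1}^{p-m} σ_{m+k})/(p σ_i)). -/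

import Mathlib

/-- Existence, uniqueness and first-order location of the deterministic correction `θ_i`:
with spiked eigenvalues `σ₁ > … > σ_m > 0`, bulk eigenvalues `σ_{m+1},…,σ_p ∈ (c, c⁻¹)`,
and the correction term smaller than `1/2`, there is a unique `θ_i ∈ [σ_i, 2σ_i]` solving
`θ_i/σ_i = (1 - (1/(pθ_i)) ∑_k σ_{m+k}/(1 - σ_{m+k}/σ_i))⁻¹`, and any such solution
satisfies `θ_i/σ_i = 1 + O((∑_k σ_{m+k})/(pσ_i))`. -/
theorem stmt_12 (p m : ℕ) (hm : 1 ≤ m) (hmp : m < p) (σ : ℕ → ℝ)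
    (hpos : 0 < σ m) (hord : ∀ i j, 1 ≤ i → i < j → j ≤ m → σ j < σ i)
    (c : ℝ) (hc : 0 < c) (hc1 : c < 1)
    (hbulk : ∀ j, m < j → j ≤ p → c < σ j ∧ σ j < c⁻¹)
    (i : ℕ) (hi1 : 1 ≤ i) (him : i ≤ m)
    (hsmall : ∀ k, 1 ≤ k → k ≤ p - m → σ (m + k) ≤ σ i / 2)
    (hhalf : (1 / ((p : ℝ) * σ i)) *
        ∑ k ∈ Finset.Icc 1 (p - m), σ (m + k) / (1 - σ (m + k) / σ i) < 1 / 2) :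
    (∃! θ : ℝ, θ ∈ Set.Icc (σ i) (2 * σ i) ∧
        θ / σ i = (1 - (1 / ((p : ℝ) * θ)) *
          ∑ k ∈ Finset.Icc 1 (p - m), σ (m + k) / (1 - σ (m + k) / σ i))⁻¹) ∧
    ∀ θ : ℝ, θ ∈ Set.Icc (σ i) (2 * σ i) →
      θ / σ i = (1 - (1 / ((p : ℝ) * θ)) *
          ∑ k ∈ Finset.Icc 1 (p - m), σ (m + k) / (1 - σ (m + k) / σ i))⁻¹ →
      |θ / σ i - 1| ≤ 4 * (∑ k ∈ Finset.Icc 1 (p - m), σ (m + k)) / ((p : ℝ) * σ i) := by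
  set S := ∑ k ∈ Finset.Icc 1 (p - m), σ (m + k) / (1 - σ (m + k) / σ i) with hSdef
  set T := ∑ k ∈ Finset.Icc 1 (p - m), σ (m + k) with hTdef
  have hσi : 0 < σ i := by
    rcases eq_or_lt_of_le him with h | h
    · rwa [h]
    · exact lt_trans hpos (hord i m hi1 h le_rfl)
  have hp : (0 : ℝ) < (p : ℝ) := by exact_mod_cast Nat.zero_lt_of_lt hmp
  -- basic facts about each term
  have hterm : ∀ k ∈ Finset.Icc 1 (p - m),
      0 < σ (m + k) ∧ σ (m + k) / (1 - σ (m + k) / σ i) ≤ 2 * σ (m + k) ∧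
      0 ≤ σ (m + k) / (1 - σ (m + k) / σ i) := by
    intro k hk
    rw [Finset.mem_Icc] at hk
    have hk1 := hk.1
    have hk2 := hk.2
    have hmk : m < m + k := by omega
    have hmkp : m + k ≤ p := by omega
    have hb := (hbulk (m + k) hmk hmkp).1
    have hσk : 0 < σ (m + k) := lt_trans hc hb
    have hs := hsmall k hk1 hk2
    have hden : (1 : ℝ) / 2 ≤ 1 - σ (m + k) / σ i := by
      have : σ (m + k) / σ i ≤ 1 / 2 := by
        rw [div_le_div_iff₀ hσi (by norm_num)]
        linarith
      linarith
    have hle : σ (m + k) / (1 - σ (m + k) / σ i) ≤ 2 * σ (m + k) := by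
      have := div_le_div_of_nonneg_left (le_of_lt hσk) (by norm_num : (0:ℝ) < 1/2) hden
      calc σ (m + k) / (1 - σ (m + k) / σ i) ≤ σ (m + k) / (1/2) := this
        _ = 2 * σ (m + k) := by ring
    refine ⟨hσk, hle, div_nonneg (le_of_lt hσk) (by linarith)⟩
  have hS0 : 0 ≤ S := Finset.sum_nonneg fun k hk => (hterm k hk).2.2
  have hT0 : 0 ≤ T := Finset.sum_nonneg fun k hk => le_of_lt (hterm k hk).1
  have hS2T : S ≤ 2 * T := by
    rw [hSdef, hTdef, Finset.mul_sum]
    exact Finset.sum_le_sum fun k hk => (hterm k hk).2.1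
  have hSsmall : S / p < σ i / 2 := by
    have hps : 0 < (p : ℝ) * σ i := mul_pos hp hσi
    have h2 : S < (p : ℝ) * σ i * (1 / 2) := by
      have h3 := mul_lt_mul_of_pos_left hhalf hps
      rwa [← mul_assoc, mul_one_div, div_self (ne_of_gt hps), one_mul] at h3
    rw [div_lt_div_iff₀ hp (by norm_num : (0:ℝ) < 2)]
    nlinarith
  set θ₀ : ℝ := σ i + S / p with hθ₀def
  have hθ₀pos : 0 < θ₀ := by positivity
  have hθ₀mem : θ₀ ∈ Set.Icc (σ i) (2 * σ i) := by
    constructor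
    · simp [hθ₀def]; positivity
    · rw [hθ₀def]; linarith
  have hθ₀eq : θ₀ / σ i = (1 - (1 / ((p : ℝ) * θ₀)) * S)⁻¹ := by
    have h1 : 1 - (1 / ((p : ℝ) * θ₀)) * S = σ i / θ₀ := by
      field_simp [hθ₀def]
      have hpS : (p : ℝ) * (S / p) = S := by field_simp
      rw [hθ₀def, mul_add, hpS]; ring
    rw [h1, inv_div]
  -- uniqueness lemma
  have key : ∀ θ : ℝ, θ ∈ Set.Icc (σ i) (2 * σ i) →
      θ / σ i = (1 - (1 / ((p : ℝ) * θ)) * S)⁻¹ → θ = θ₀ := by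
    intro θ hmem heq
    have hθpos : 0 < θ := lt_of_lt_of_le hσi hmem.1
    have hlhs : 0 < θ / σ i := div_pos hθpos hσi
    have hx : 0 < 1 - (1 / ((p : ℝ) * θ)) * S := by
      by_contra h
      push_neg at h
      rcases eq_or_lt_of_le h with h' | h'
      · rw [h', inv_zero] at heq
        linarith [heq ▸ hlhs]
      · have hneg : (1 - (1 / ((p : ℝ) * θ)) * S)⁻¹ < 0 := inv_neg''.mpr h'
        rw [heq] at hlhs; linarith
    have h2 : σ i / θ = 1 - (1 / ((p : ℝ) * θ)) * S := by
      have := congrArg Inv.inv heq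
      rwa [inv_div, inv_inv] at this
    have h3 : σ i * ((p : ℝ) * θ) = (p : ℝ) * θ * θ - S * θ := by
      field_simp at h2
      linear_combination θ * h2
    have h4 : (p : ℝ) * θ = (p : ℝ) * σ i + S := by
      have : θ * ((p : ℝ) * θ - ((p : ℝ) * σ i + S)) = 0 := by ring_nf; nlinarith [h3]
      rcases mul_eq_zero.mp this with h | h
      · exact absurd h (ne_of_gt hθpos)
      · linarith
    rw [hθ₀def]
    field_simp
    linarith
  constructor
  · exact ⟨θ₀, ⟨hθ₀mem, hθ₀eq⟩, fun θ h => key θ h.1 h.2⟩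
  · intro θ hmem heq
    have hθ := key θ hmem heq
    rw [hθ, hθ₀def]
    have h5 : (σ i + S / ↑p) / σ i - 1 = S / ((p : ℝ) * σ i) := by
      field_simp
      ring
    rw [h5, abs_of_nonneg (by positivity)]
    gcongr
    linarith
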